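/- Let p be a positive continuous probability density on ℝ. If a probability density q on ℝ satisfies E_q[(O_LS f)] = 0 for the functions f_A constructed for every interval A = (-∞, t], then q = p almost everywhere (q equals p in distribution). -/

import Mathlib

open MeasureTheory Set

/-! Since `(f_A p)(z) = ∫_{-∞}^z p (1_A - p(A))`, the fundamental theorem of calculus gives
`O_LS f_A = 1_A - p(A)` wherever `1_A` is continuous, that is off the frontier of `A`. For
`A = (-∞, t]` this frontier is the null set `{t}`, so `E_q[O_LS f_A] = Q(A) - P(A)`. Vanishing for
every `t` makes the distribution functions of `q dz` and `p dz` agree; hence the two measures agree,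
and so do their densities. -/

theorem continuousAt_indicator_const_of_notMem_frontier {X β : Type*} [TopologicalSpace X]
    [TopologicalSpace β] [Zero β] {A : Set X} {z : X} (hz : z ∉ frontier A) (c : β) :
    ContinuousAt (A.indicator fun _ => c) z := by
  rw [frontier, mem_sdiff, not_and_or, not_not] at hz
  rcases hz with hz | hz
  · refine (continuousAt_const (y := (0 : β))).congr ?_
    filter_upwards [isClosed_closure.isOpen_compl.mem_nhds hz] with y hy
    exact (indicator_of_notMem (fun h => hy (subset_closure h)) _).symm
  · refine (continuousAt_const (y := c)).congr ?_
    filter_upwards [mem_interior_iff_mem_nhds.mp hz] with y hy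
    rw [indicator_of_mem hy]

theorem hasDerivAt_setIntegral_Iic {E : Type*} [NormedAddCommGroup E] [NormedSpace ℝ E]
    [CompleteSpace E] {g : ℝ → E} (hg : Integrable g) {z : ℝ} (hgz : ContinuousAt g z) :
    HasDerivAt (fun x => ∫ a in Iic x, g a) (g z) z := by
  have hsplit : (fun x => ∫ a in Iic x, g a) =
      fun x => (∫ a in Iic z, g a) + ∫ a in z..x, g a := by
    funext x
    rw [← intervalIntegral.integral_Iic_sub_Iic hg.integrableOn hg.integrableOn, add_sub_cancel]
  rw [hsplit]
  exact (intervalIntegral.integral_hasDerivAt_right hg.intervalIntegrable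
    hg.aestronglyMeasurable.stronglyMeasurableAtFilter hgz).const_add _

theorem ae_eq_of_forall_setIntegral_Iic_eq {α : Type*} [TopologicalSpace α] [MeasurableSpace α]
    [SecondCountableTopology α] [LinearOrder α] [OrderTopology α] [BorelSpace α] {μ : Measure α}
    {f g : α → ℝ} (hf : Integrable f μ) (hg : Integrable g μ) (hf0 : 0 ≤ᵐ[μ] f)
    (hg0 : 0 ≤ᵐ[μ] g) (h : ∀ t, ∫ x in Iic t, f x ∂μ = ∫ x in Iic t, g x ∂μ) : f =ᵐ[μ] g := by
  have := isFiniteMeasure_withDensity_ofReal hf.2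
  have hμ : μ.withDensity (fun x => ENNReal.ofReal (f x)) =
      μ.withDensity (fun x => ENNReal.ofReal (g x)) := by
    refine Measure.ext_of_Iic _ _ fun t => ?_
    rw [withDensity_apply _ measurableSet_Iic, withDensity_apply _ measurableSet_Iic,
      ← ofReal_integral_eq_lintegral_ofReal hf.integrableOn (ae_restrict_of_ae hf0),
      ← ofReal_integral_eq_lintegral_ofReal hg.integrableOn (ae_restrict_of_ae hg0), h t]
  rw [withDensity_eq_iff hf.aemeasurable.ennreal_ofReal hg.aemeasurable.ennreal_ofReal
    hf.lintegral_lt_top.ne] at hμ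
  filter_upwards [hμ, hf0, hg0] with x hx hfx hgx
  exact (ENNReal.ofReal_eq_ofReal_iff hfx hgx).mp hx

noncomputable def langevinStein (p f : ℝ → ℝ) (z : ℝ) : ℝ :=
  deriv (fun y => f y * p y) z / p z

/-- The paper's `f_A`. -/
noncomputable def steinSolution (p : ℝ → ℝ) (A : Set ℝ) (z : ℝ) : ℝ :=
  (1 / p z) * ∫ a in Iic z, p a * (A.indicator (fun _ => (1 : ℝ)) a - ∫ b in A, p b)

theorem langevinStein_steinSolution {p : ℝ → ℝ} (hp0 : ∀ y, p y ≠ 0) (hp : Integrable p)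
    {A : Set ℝ} (hA : MeasurableSet A) {z : ℝ} (hpz : ContinuousAt p z) (hz : z ∉ frontier A) :
    langevinStein p (steinSolution p A) z = A.indicator (fun _ => 1) z - ∫ b in A, p b := by
  set g : ℝ → ℝ := fun a => p a * (A.indicator (fun _ => (1 : ℝ)) a - ∫ b in A, p b)
  have hprod : (fun y => steinSolution p A y * p y) = fun y => ∫ a in Iic y, g a := by
    funext y
    simp only [steinSolution]
    field_simp [hp0 y]
    rfl
  have hg : Integrable g := by
    have hg_eq : g = fun a => A.indicator p a - (∫ b in A, p b) * p a := by
      funext a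
      by_cases ha : a ∈ A <;> simp [g, ha] <;> ring
    rw [hg_eq]
    exact (hp.indicator hA).sub (hp.const_mul _)
  have hgz : ContinuousAt g z :=
    hpz.mul ((continuousAt_indicator_const_of_notMem_frontier hz 1).sub continuousAt_const)
  rw [langevinStein, hprod, (hasDerivAt_setIntegral_Iic hg hgz).deriv]
  exact mul_div_cancel_left₀ _ (hp0 z)

theorem integral_mul_langevinStein_steinSolution {p q : ℝ → ℝ} (hc : Continuous p)
    (hp0 : ∀ y, p y ≠ 0) (hp : Integrable p) (hq : Integrable q) (hq1 : ∫ z, q z = 1)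
    {A : Set ℝ} (hA : MeasurableSet A) (hA' : volume (frontier A) = 0) :
    ∫ z, q z * langevinStein p (steinSolution p A) z = (∫ z in A, q z) - ∫ z in A, p z := by
  have hae : (fun z => q z * langevinStein p (steinSolution p A) z) =ᵐ[volume]
      fun z => A.indicator q z - (∫ b in A, p b) * q z := by
    filter_upwards [measure_eq_zero_iff_ae_notMem.mp hA'] with z hz
    rw [langevinStein_steinSolution hp0 hp hA hc.continuousAt hz]
    by_cases h : z ∈ A <;> simp [h] <;> ring
  rw [integral_congr_ae hae, integral_sub (hq.indicator hA) (hq.const_mul _),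
    integral_indicator hA, integral_const_mul, hq1, mul_one]

theorem langevin_stein_halfline_tests_determine_density_general
    (p : ℝ → ℝ) (hc : Continuous p) (hpos : ∀ z, 0 < p z)
    (hpint : ∫ z, p z = 1)
    (q : ℝ → ℝ) (hqnn : ∀ z, 0 ≤ q z)
    (hqint : ∫ z, q z = 1)
    (fA : ℝ → ℝ → ℝ)
    (hfA : ∀ t, fA t = fun z => (1 / p z) *
      ∫ a in Iic z, p a * ((Iic t).indicator (fun _ => (1 : ℝ)) a - ∫ b in Iic t, p b))
    (hzero : ∀ t : ℝ,
      ∫ z, q z * (deriv (fun y => fA t y * p y) z / p z) = 0) :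
    q =ᵐ[volume] p := by
  have hp : Integrable p := Integrable.of_integral_ne_zero (by simp [hpint])
  have hq : Integrable q := Integrable.of_integral_ne_zero (by simp [hqint])
  refine ae_eq_of_forall_setIntegral_Iic_eq hq hp (ae_of_all _ hqnn)
    (ae_of_all _ fun z => (hpos z).le) fun t => ?_
  have hstein := integral_mul_langevinStein_steinSolution hc (fun z => (hpos z).ne') hp hq hqint
    (measurableSet_Iic (a := t)) (by simp)
  have hsol : fA t = steinSolution p (Iic t) := hfA t
  have hzero_t : ∫ z, q z * langevinStein p (fA t) z = 0 := hzero t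
  rw [hsol, hstein] at hzero_t
  linarith

/-- If a probability density q on ℝ gives zero expectation to the Langevin-Stein operator
(O_LS f)(z) = (f·p)'(z)/p(z) applied to the test functions f_A built from every
half-line A = (-∞, t], then q = p almost everywhere. -/
theorem langevin_stein_halfline_tests_determine_density
    (p : ℝ → ℝ) (hc : Continuous p) (hpos : ∀ z, 0 < p z)
    (hpint : ∫ z, p z = 1)
    (q : ℝ → ℝ) (hqmeas : Measurable q) (hqnn : ∀ z, 0 ≤ q z)
    (hqint : ∫ z, q z = 1)
    (fA : ℝ → ℝ → ℝ)
    (hfA : ∀ t, fA t = fun z => (1 / p z) *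
      ∫ a in Iic z, p a * ((Iic t).indicator (fun _ => (1 : ℝ)) a - ∫ b in Iic t, p b))
    (hzero : ∀ t : ℝ,
      ∫ z, q z * (deriv (fun y => fA t y * p y) z / p z) = 0) :
    q =ᵐ[volume] p :=
  langevin_stein_halfline_tests_determine_density_general p hc hpos hpint q hqnn hqint fA hfA hzero
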